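/- arXiv:1312.5886 — 4 statements merged into one kernel-verified Lean document; each statement's English description precedes it below -/
import Mathlib

section
/- (Harten's lemma) Consider an update of the form C_j^{n+1} = C_j^n - κ1_{j-1}(C_j^n - C_{j-1}^n) + κ2_j(C_{j+1}^n - C_j^n) on a doubly infinite grid, where the coefficients satisfy κ1_j ≥ 0, κ2_j ≥ 0, and κ1_j + κ2_j ≤ 1 for all j. Then the scheme is total variation diminishing: Σ_j |C_{j+1}^{n+1} - C_j^{n+1}| ≤ Σ_j |C_{j+1}^n - C_j^n| (assuming the total variation of C^n is finite). -/
/-!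
Writing `Δ` for the forward difference and `C'` for the updated data,
`Δ C' j = (1 - κ1 j - κ2 j) Δ C j + κ1 (j-1) Δ C (j-1) + κ2 (j+1) Δ C (j+1)`,
a combination with nonnegative coefficients, so `|Δ C' j|` is bounded by the same combination
of the `|Δ C|`. Summing over `j`, the shifted terms `κ1 (j-1) |Δ C (j-1)|` and
`κ2 (j+1) |Δ C (j+1)|` sum to the unshifted ones, and the weights of each `|Δ C j|` add up to `1`.
-/

open fwdDiff

def incrementalUpdate (κ1 κ2 C : ℤ → ℝ) (j : ℤ) : ℝ :=
  C j - κ1 (j - 1) * (C j - C (j - 1)) + κ2 j * (C (j + 1) - C j)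

lemma fwdDiff_incrementalUpdate (κ1 κ2 C : ℤ → ℝ) (j : ℤ) :
    Δ_[1] (incrementalUpdate κ1 κ2 C) j =
      (1 - κ1 j - κ2 j) * Δ_[1] C j + κ1 (j - 1) * Δ_[1] C (j - 1)
        + κ2 (j + 1) * Δ_[1] C (j + 1) := by
  simp only [fwdDiff, incrementalUpdate, add_sub_cancel_right, sub_add_cancel]
  ring

lemma abs_add_add_le_of_nonneg {a b c : ℝ} (ha : 0 ≤ a) (hb : 0 ≤ b) (hc : 0 ≤ c)
    (x y z : ℝ) : |a * x + b * y + c * z| ≤ a * |x| + b * |y| + c * |z| :=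
  calc |a * x + b * y + c * z| ≤ |a * x| + |b * y| + |c * z| :=
        (abs_add_le _ _).trans (add_le_add_left (abs_add_le _ _) _)
    _ = a * |x| + b * |y| + c * |z| := by
        rw [abs_mul, abs_mul, abs_mul, abs_of_nonneg ha, abs_of_nonneg hb, abs_of_nonneg hc]

lemma HasSum.comp_add_right {G α : Type*} [AddGroup G] [AddCommMonoid α] [TopologicalSpace α]
    {f : G → α} {a : α} (hf : HasSum f a) (k : G) : HasSum (fun j => f (j + k)) a :=
  (Equiv.addRight k).hasSum_iff.mpr hf

lemma Summable.mul_left_of_nonneg_of_le_one {ι : Type*} {w f : ι → ℝ} (hf : Summable f)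
    (hf0 : ∀ i, 0 ≤ f i) (hw0 : ∀ i, 0 ≤ w i) (hw1 : ∀ i, w i ≤ 1) :
    Summable fun i => w i * f i :=
  hf.of_nonneg_of_le (fun i => mul_nonneg (hw0 i) (hf0 i))
    fun i => mul_le_of_le_one_left (hf0 i) (hw1 i)

lemma hasSum_transport {G α : Type*} [AddGroup G] [AddCommGroup α] [TopologicalSpace α]
    [IsTopologicalAddGroup α] {f p q : G → α} (hf : Summable f) (hp : Summable p)
    (hq : Summable q) (h : G) :
    HasSum (fun j => f j - p j - q j + p (j - h) + q (j + h)) (∑' j, f j) := by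
  have hp' : HasSum (fun j => p (j - h)) (∑' j, p j) := by
    simpa only [sub_eq_add_neg] using hp.hasSum.comp_add_right (-h)
  convert (((hf.hasSum.sub hp.hasSum).sub hq.hasSum).add hp').add
    (hq.hasSum.comp_add_right h) using 1
  abel

/-- Harten's lemma: a scheme in incremental form with nonnegative coefficients
summing to at most one is total variation diminishing. -/
theorem stmt_4 (Cn Cn1 κ1 κ2 : ℤ → ℝ)
    (hκ1 : ∀ j, 0 ≤ κ1 j) (hκ2 : ∀ j, 0 ≤ κ2 j)
    (hsum : ∀ j, κ1 j + κ2 j ≤ 1)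
    (hupdate : ∀ j, Cn1 j =
      Cn j - κ1 (j - 1) * (Cn j - Cn (j - 1)) + κ2 j * (Cn (j + 1) - Cn j))
    (hTV : Summable fun j : ℤ => |Cn (j + 1) - Cn j|) :
    ∑' j : ℤ, |Cn1 (j + 1) - Cn1 j| ≤ ∑' j : ℤ, |Cn (j + 1) - Cn j| := by
  obtain rfl : Cn1 = incrementalUpdate κ1 κ2 Cn := funext hupdate
  change ∑' j, |Δ_[1] (incrementalUpdate κ1 κ2 Cn) j| ≤ ∑' j, |Δ_[1] Cn j|
  set g := fun j => |Δ_[1] Cn j|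
  have hg0 (j : ℤ) : 0 ≤ g j := abs_nonneg _
  have hp := hTV.mul_left_of_nonneg_of_le_one hg0 hκ1 fun j => by linarith [hsum j, hκ2 j]
  have hq := hTV.mul_left_of_nonneg_of_le_one hg0 hκ2 fun j => by linarith [hsum j, hκ1 j]
  have hbound (j : ℤ) : |Δ_[1] (incrementalUpdate κ1 κ2 Cn) j| ≤
      g j - κ1 j * g j - κ2 j * g j + κ1 (j - 1) * g (j - 1) + κ2 (j + 1) * g (j + 1) := by
    rw [fwdDiff_incrementalUpdate]
    refine (abs_add_add_le_of_nonneg ?_ (hκ1 _) (hκ2 _) _ _ _).trans_eq (by ring)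
    linarith [hsum j]
  have htotal := hasSum_transport hTV hp hq 1
  exact hasSum_le hbound
    (htotal.summable.of_nonneg_of_le (fun _ => abs_nonneg _) hbound).hasSum htotal
end

section
/- Consider the fully discrete first order optimal variable relaxed (HLL-type) update H(C;j) = C_j - (Δt/Δx)(F_{j+1/2} - F_{j-1/2}) with numerical flux F_{j-1/2} = F(C_{j-1}) + (-a⁻_{j-1/2})/(a⁺_{j-1/2} - a⁻_{j-1/2}) · [F(C_j) - F(C_{j-1}) - a⁺_{j-1/2}(C_j - C_{j-1})], where a⁻_{j-1/2} < 0 < a⁺_{j-1/2}. If a⁻_{j-1/2} ≤ min(F'(C_{j-1}), 0) and a⁺_{j-1/2} ≥ max(F'(C_j), 0) for all j, and (Δt/Δx)·a_max ≤ 1/2 where a_max bounds all |a^±|, then all partial derivatives ∂H(C;j)/∂C_i are nonnegative, i.e. the scheme is monotone. -/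
/-- The first order optimal (HLL-type) variable relaxed numerical flux at
interface j - 1/2, with left and right speeds `aL j < 0 < aR j`. -/
noncomputable def hllFlux (F : ℝ → ℝ) (aL aR : ℤ → ℝ) (C : ℤ → ℝ) (j : ℤ) : ℝ :=
  F (C (j - 1)) + (-aL j) / (aR j - aL j) *
    (F (C j) - F (C (j - 1)) - aR j * (C j - C (j - 1)))

/-- The fully discrete first order optimal variable relaxed update. -/
noncomputable def hllUpdate (Δt Δx : ℝ) (F : ℝ → ℝ) (aL aR : ℤ → ℝ)
    (C : ℤ → ℝ) (j : ℤ) : ℝ :=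
  C j - Δt / Δx * (hllFlux F aL aR C (j + 1) - hllFlux F aL aR C j)

/-!
The HLL flux at `k - 1/2` is a two-point flux `Φ(C_{k-1}, C_k)`, so `H(·; j)` depends only on
`C_{j-1}, C_j, C_{j+1}` and its partial derivatives are `λ ∂₁Φ_j`, `1 - λ (∂₁Φ_{j+1} - ∂₂Φ_j)` and
`-λ ∂₂Φ_{j+1}` with `λ = Δt/Δx`. The subcharacteristic conditions make `∂₁Φ ≥ 0 ≥ ∂₂Φ`.
Moreover `∂₁Φ` is a convex combination of `F'` and `a⁺`, and `-∂₂Φ` one of `-a⁻` and `-F'`,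
so both are at most `amax`, and the CFL condition `λ amax ≤ 1/2` controls the diagonal term.
-/

open Function

lemma hasDerivAt_update_apply {𝕜 ι : Type*} [NontriviallyNormedField 𝕜] [DecidableEq ι]
    (x : ι → 𝕜) (i m : ι) (y : 𝕜) :
    HasDerivAt (fun t => update x i t m) ((Pi.single i 1 : ι → 𝕜) m) y := by
  by_cases h : m = i
  · subst h
    simpa only [update_self, Pi.single_eq_same] using hasDerivAt_id' y
  · simpa only [update_of_ne h, Pi.single_eq_of_ne h] using hasDerivAt_const y (x m)

/-- The partial derivatives `∂Φ/∂C_{k-1}` and `∂Φ/∂C_k` of the flux `Φ = F_{k-1/2}`, where `s` is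
`F'(C_{k-1})`, resp. `F'(C_k)`. -/
noncomputable def hllFluxDerivLeft (aL aR s : ℝ) : ℝ := aR * (s - aL) / (aR - aL)

noncomputable def hllFluxDerivRight (aL aR s : ℝ) : ℝ := aL * (aR - s) / (aR - aL)

section

variable {aL aR s a : ℝ}

lemma hllFluxDerivLeft_nonneg (hLR : aL < aR) (hR : 0 ≤ aR) (hs : aL ≤ s) :
    0 ≤ hllFluxDerivLeft aL aR s :=
  div_nonneg (mul_nonneg hR (sub_nonneg.2 hs)) (sub_nonneg.2 hLR.le)

lemma hllFluxDerivRight_nonpos (hLR : aL < aR) (hL : aL ≤ 0) (hs : s ≤ aR) :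
    hllFluxDerivRight aL aR s ≤ 0 :=
  div_nonpos_of_nonpos_of_nonneg (mul_nonpos_of_nonpos_of_nonneg hL (sub_nonneg.2 hs))
    (sub_nonneg.2 hLR.le)

lemma hllFluxDerivLeft_le (hL : aL ≤ 0) (hR : 0 < aR) (hs : s ≤ a) (hRa : aR ≤ a) :
    hllFluxDerivLeft aL aR s ≤ a := by
  rw [hllFluxDerivLeft, div_le_iff₀ (by linarith)]
  nlinarith

lemma neg_hllFluxDerivRight_le (hL : aL < 0) (hR : 0 ≤ aR) (hs : -a ≤ s) (hLa : -a ≤ aL) :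
    -hllFluxDerivRight aL aR s ≤ a := by
  rw [hllFluxDerivRight, neg_le, le_div_iff₀ (by linarith)]
  nlinarith

end

variable {F : ℝ → ℝ} {aL aR : ℤ → ℝ}

lemma hasDerivAt_hllFlux_update (hF : Differentiable ℝ F) {k : ℤ} (hk : aL k < aR k)
    (C : ℤ → ℝ) (i : ℤ) :
    HasDerivAt (fun t => hllFlux F aL aR (update C i t) k)
      ((Pi.single i 1 : ℤ → ℝ) (k - 1) * hllFluxDerivLeft (aL k) (aR k) (deriv F (C (k - 1)))
        + (Pi.single i 1 : ℤ → ℝ) k * hllFluxDerivRight (aL k) (aR k) (deriv F (C k))) (C i) := by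
  have hu := hasDerivAt_update_apply C i (k - 1) (C i)
  have hv := hasDerivAt_update_apply C i k (C i)
  have hFu := (hF _).hasDerivAt.comp (C i) hu
  have hFv := (hF _).hasDerivAt.comp (C i) hv
  simp only [update_eq_self] at hFu hFv
  have hk' : aR k - aL k ≠ 0 := by linarith
  refine (hFu.add (((hFv.sub hFu).sub ((hv.sub hu).const_mul (aR k))).const_mul
    (-aL k / (aR k - aL k)))).congr_deriv ?_
  simp only [hllFluxDerivLeft, hllFluxDerivRight]
  field_simp
  ring

lemma hasDerivAt_hllUpdate_update (Δt Δx : ℝ) (hF : Differentiable ℝ F)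
    (hLR : ∀ k, aL k < aR k) (C : ℤ → ℝ) (i j : ℤ) :
    HasDerivAt (fun t => hllUpdate Δt Δx F aL aR (update C i t) j)
      ((Pi.single i 1 : ℤ → ℝ) j - Δt / Δx *
        ((Pi.single i 1 : ℤ → ℝ) j * hllFluxDerivLeft (aL (j + 1)) (aR (j + 1)) (deriv F (C j))
          + (Pi.single i 1 : ℤ → ℝ) (j + 1) *
              hllFluxDerivRight (aL (j + 1)) (aR (j + 1)) (deriv F (C (j + 1)))
          - ((Pi.single i 1 : ℤ → ℝ) (j - 1) * hllFluxDerivLeft (aL j) (aR j) (deriv F (C (j - 1)))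
            + (Pi.single i 1 : ℤ → ℝ) j * hllFluxDerivRight (aL j) (aR j) (deriv F (C j)))))
      (C i) := by
  have hnext := hasDerivAt_hllFlux_update hF (hLR (j + 1)) C i
  rw [add_sub_cancel_right] at hnext
  exact (hasDerivAt_update_apply C i j (C i)).sub
    ((hnext.sub (hasDerivAt_hllFlux_update hF (hLR j) C i)).const_mul (Δt / Δx))

/-- Monotonicity of the first order optimal variable relaxed scheme. -/
theorem stmt_6 (Δt Δx amax : ℝ) (F : ℝ → ℝ) (aL aR : ℤ → ℝ) (C : ℤ → ℝ)
    (hΔt : 0 < Δt) (hΔx : 0 < Δx)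
    (hF : Differentiable ℝ F)
    (hneg : ∀ j, aL j < 0) (hpos : ∀ j, 0 < aR j)
    (hsubL : ∀ j, aL j ≤ min (deriv F (C (j - 1))) 0)
    (hsubR : ∀ j, max (deriv F (C j)) 0 ≤ aR j)
    (hboundL : ∀ j, |aL j| ≤ amax) (hboundR : ∀ j, aR j ≤ amax)
    (hCFL : Δt / Δx * amax ≤ 1 / 2) :
    ∀ i j : ℤ,
      0 ≤ deriv (fun t => hllUpdate Δt Δx F aL aR (Function.update C i t) j) (C i) := by
  intro i j
  have hLR k : aL k < aR k := (hneg k).trans (hpos k)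
  have hratio : 0 ≤ Δt / Δx := by positivity
  have hL k : aL k ≤ deriv F (C (k - 1)) := (hsubL k).trans (min_le_left _ _)
  have hR k : deriv F (C k) ≤ aR k := (le_max_left _ _).trans (hsubR k)
  have hLmin k : -amax ≤ aL k := (abs_le.1 (hboundL k)).1
  rw [(hasDerivAt_hllUpdate_update Δt Δx hF hLR C i j).deriv]
  rcases eq_or_ne i (j - 1) with rfl | h₁
  · simpa [Pi.single_eq_of_ne (show j + 1 ≠ j - 1 by omega)] using
      mul_nonneg hratio (hllFluxDerivLeft_nonneg (hLR j) (hpos j).le (hL j))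
  rcases eq_or_ne i j with rfl | h₂
  · have hFi : -amax ≤ deriv F (C i) := by simpa using (hLmin (i + 1)).trans (hL (i + 1))
    have hleft := hllFluxDerivLeft_le (hneg (i + 1)).le (hpos (i + 1))
      ((hR i).trans (hboundR i)) (hboundR (i + 1))
    have hright := neg_hllFluxDerivRight_le (hneg i) (hpos i).le hFi (hLmin i)
    simpa using show Δt / Δx * (hllFluxDerivLeft (aL (i + 1)) (aR (i + 1)) (deriv F (C i))
      - hllFluxDerivRight (aL i) (aR i) (deriv F (C i))) ≤ 1 by nlinarith
  rcases eq_or_ne i (j + 1) with rfl | h₃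
  · simpa [Pi.single_eq_of_ne (show j - 1 ≠ j + 1 by omega)] using
      mul_nonpos_of_nonneg_of_nonpos hratio (hllFluxDerivRight_nonpos (hLR _) (hneg _).le (hR _))
  simp [h₁.symm, h₂.symm, h₃.symm]
end

section
/- For the 2x2 Engquist–Runborg system with fluxes F(C) = (C₁²/r, C₁C₂/r) and G(C) = (C₁C₂/r, C₂²/r), where r = √(C₁² + C₂²) > 0, the Jacobian F'(C) has the single eigenvalue cos θ (where cos θ = C₁/r, sin θ = C₂/r) with algebraic multiplicity 2 but geometric multiplicity 1 whenever sin θ ≠ 0; i.e., F'(C) is similar to the Jordan block [[cos θ, -sin θ],[0, cos θ]] via R = [[cos θ, -sin θ],[sin θ, cos θ]], hence has an incomplete set of eigenvectors. -/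
/-!
Write `u = (cos θ, sin θ)` and `u⊥ = (-sin θ, cos θ)`. Conjugating the Jordan block by the
rotation gives `A = cos θ • 1 + (-sin θ • u) u⊥ᵀ`, a scalar plus a rank-one nilpotent part since
`u⊥ ⬝ u = 0`. Such a matrix has no eigenvalue other than `cos θ`, and for `sin θ ≠ 0` its
`cos θ`-eigenspace is `ker u⊥ᵀ = ℝ u`. On the other hand `ERFlux C = (C₀ / |C|) • C`, whose
derivative at `r u` is `h ↦ cos θ • h + (h₀ - cos θ (u ⬝ h)) • u`, which is `A h`.
-/

open Real Matrix

/-- The x-flux of the Engquist–Runborg geometric optics system. -/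
noncomputable def ERFlux : (Fin 2 → ℝ) → (Fin 2 → ℝ) :=
  fun C => ![(C 0) ^ 2 / Real.sqrt ((C 0) ^ 2 + (C 1) ^ 2),
             C 0 * C 1 / Real.sqrt ((C 0) ^ 2 + (C 1) ^ 2)]

namespace Matrix

variable {K n : Type*} [Field K] [Fintype n] [DecidableEq n]

theorem smul_one_add_vecMulVec_mulVec (c : K) (u w v : n → K) :
    (c • 1 + vecMulVec u w) *ᵥ v = c • v + (w ⬝ᵥ v) • u := by
  rw [add_mulVec, smul_mulVec, one_mulVec, vecMulVec_mulVec, op_smul_eq_smul]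

theorem eq_of_smul_one_add_vecMulVec_mulVec_eq_smul {c μ : K} {u w v : n → K}
    (hwu : w ⬝ᵥ u = 0) (hv : v ≠ 0) (h : (c • 1 + vecMulVec u w) *ᵥ v = μ • v) : μ = c := by
  rw [smul_one_add_vecMulVec_mulVec] at h
  have hwv : (μ - c) * (w ⬝ᵥ v) = 0 := by
    have := congrArg (w ⬝ᵥ ·) h
    simp only [dotProduct_add, dotProduct_smul, hwu, smul_eq_mul] at this
    linear_combination -this
  by_contra hμ
  rw [(mul_eq_zero.mp hwv).resolve_left (sub_ne_zero.mpr hμ), zero_smul, add_zero] at h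
  exact hμ (smul_left_injective K hv h).symm

theorem smul_one_add_vecMulVec_mulVec_eq_smul_iff {c : K} {u w : n → K} (hu : u ≠ 0)
    (v : n → K) : (c • 1 + vecMulVec u w) *ᵥ v = c • v ↔ w ⬝ᵥ v = 0 := by
  rw [smul_one_add_vecMulVec_mulVec, add_eq_left, smul_eq_zero]
  exact or_iff_left hu

end Matrix

theorem rotation_inv (θ : ℝ) :
    (!![cos θ, -sin θ; sin θ, cos θ])⁻¹ = !![cos θ, sin θ; -sin θ, cos θ] := by
  refine inv_eq_left_inv ?_
  ext i j
  fin_cases i <;> fin_cases j <;> simp [mul_apply] <;> grind [sin_sq_add_cos_sq]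

theorem rotation_mul_jordan_mul_rotation_inv (θ : ℝ) :
    !![cos θ, -sin θ; sin θ, cos θ] * !![cos θ, -sin θ; 0, cos θ] *
        (!![cos θ, -sin θ; sin θ, cos θ])⁻¹ =
      cos θ • 1 + vecMulVec (-sin θ • ![cos θ, sin θ]) ![-sin θ, cos θ] := by
  rw [rotation_inv]
  ext i j
  fin_cases i <;> fin_cases j <;> simp [mul_apply] <;> grind [sin_sq_add_cos_sq]

theorem eq_smul_of_dotProduct_rotation_eq_zero {θ : ℝ} {v : Fin 2 → ℝ}
    (hv : ![-sin θ, cos θ] ⬝ᵥ v = 0) :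
    v = (![cos θ, sin θ] ⬝ᵥ v) • ![cos θ, sin θ] := by
  simp only [dotProduct, Fin.sum_univ_two] at hv ⊢
  ext i
  fin_cases i <;> simp at hv ⊢ <;> grind [sin_sq_add_cos_sq]

theorem ERFlux_eq_smul :
    ERFlux = fun C : Fin 2 → ℝ => (C 0 / √(C 0 ^ 2 + C 1 ^ 2)) • C := by
  funext C i
  fin_cases i <;> simp [ERFlux] <;> ring

theorem hasFDerivAt_ERFlux {r θ : ℝ} (hr : 0 < r) :
    HasFDerivAt ERFlux (toLin'
      (cos θ • 1 + vecMulVec (-sin θ • ![cos θ, sin θ]) ![-sin θ, cos θ])).toContinuousLinearMap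
      ![r * cos θ, r * sin θ] := by
  set C : Fin 2 → ℝ := ![r * cos θ, r * sin θ]
  have hρ : √((r * cos θ) ^ 2 + (r * sin θ) ^ 2) = r := by
    rw [show (r * cos θ) ^ 2 + (r * sin θ) ^ 2 = r ^ 2 by
      linear_combination r ^ 2 * cos_sq_add_sin_sq θ, sqrt_sq hr.le]
  have hρ0 : √(C 0 ^ 2 + C 1 ^ 2) ≠ 0 := hρ ▸ hr.ne'
  have hx (i : Fin 2) :
      HasFDerivAt (fun C : Fin 2 → ℝ => C i) (ContinuousLinearMap.proj (R := ℝ) i) C :=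
    hasFDerivAt_apply i C
  have hq := ((hx 0).pow 2).fun_add ((hx 1).pow 2)
  have hinv := (hasDerivAt_inv hρ0).comp_hasFDerivAt C
    (hq.sqrt fun h => hρ0 (by rw [h, sqrt_zero]))
  rw [ERFlux_eq_smul]
  refine (((hx 0).fun_mul hinv).fun_smul (hasFDerivAt_id C)).congr_fderiv ?_
  ext h i
  fin_cases i <;> simp [C, hρ] <;> field_simp <;> grind [sin_sq_add_cos_sq]

/-- The Jacobian of the Engquist–Runborg x-flux at C = (r cos θ, r sin θ) is
R·[[cos θ, -sin θ],[0, cos θ]]·R⁻¹ with R the rotation by θ; when sin θ ≠ 0 it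
has the single eigenvalue cos θ with a one-dimensional eigenspace. -/
theorem stmt_8 (r θ : ℝ) (hr : 0 < r)
    (C : Fin 2 → ℝ) (hC : C = ![r * Real.cos θ, r * Real.sin θ])
    (A : Matrix (Fin 2) (Fin 2) ℝ)
    (hA : A = !![Real.cos θ, -Real.sin θ; Real.sin θ, Real.cos θ] *
              !![Real.cos θ, -Real.sin θ; 0, Real.cos θ] *
              (!![Real.cos θ, -Real.sin θ; Real.sin θ, Real.cos θ])⁻¹) :
    HasFDerivAt ERFlux
      (LinearMap.toContinuousLinearMap (Matrix.toLin' A)) C ∧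
    (Real.sin θ ≠ 0 →
      (∀ (μ : ℝ) (v : Fin 2 → ℝ), v ≠ 0 → A.mulVec v = μ • v → μ = Real.cos θ) ∧
      ∃ v : Fin 2 → ℝ, v ≠ 0 ∧ A.mulVec v = Real.cos θ • v ∧
        ∀ w : Fin 2 → ℝ, A.mulVec w = Real.cos θ • w → ∃ t : ℝ, w = t • v) := by
  rw [rotation_mul_jordan_mul_rotation_inv] at hA
  subst hC hA
  have horth : ![-sin θ, cos θ] ⬝ᵥ (-sin θ • ![cos θ, sin θ]) = 0 := by
    simp [dotProduct]
    ring
  refine ⟨hasFDerivAt_ERFlux hr, fun hs => ⟨fun μ v hv h =>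
    eq_of_smul_one_add_vecMulVec_mulVec_eq_smul horth hv h, ?_⟩⟩
  have hu : -sin θ • ![cos θ, sin θ] ≠ 0 := fun h => hs (by simpa using congrFun h 1)
  refine ⟨![cos θ, sin θ], fun h => hs (by simpa using congrFun h 1), ?_, fun w hw => ?_⟩
  · rw [smul_one_add_vecMulVec_mulVec_eq_smul_iff hu]
    simp [dotProduct]
    ring
  · exact ⟨_, eq_smul_of_dotProduct_rotation_eq_zero
      ((smul_one_add_vecMulVec_mulVec_eq_smul_iff hu w).mp hw)⟩
end

section
/- For the Engquist–Runborg system, every linear combination α·F'(C) + β·G'(C) with (α,β) ≠ (0,0) of the two flux Jacobians is non-diagonalizable (has a repeated eigenvalue α cos θ + β sin θ with a one-dimensional eigenspace) whenever -α sin θ + β cos θ ≠ 0. -/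
/-!
In the frame of the rotation `R` both Jacobians are upper triangular with equal diagonal
entries, so `α F' + β G'` is conjugate to the block `[[a, b], [0, a]]` with
`a = α cos θ + β sin θ` and `b = -α sin θ + β cos θ`. A triangular matrix has only its
diagonal entries as eigenvalues, and for `b ≠ 0` the eigenvectors of the block for `a` are
the multiples of `e₀`; conjugating back, those of `α F' + β G'` are the multiples of `R e₀`.
-/

open Real Matrix

namespace Matrix

variable {n K : Type*} [Fintype n] [DecidableEq n] [Field K]

theorem conj_mulVec_eq_smul_iff {P : Matrix n n K} (hP : IsUnit P.det) (A : Matrix n n K)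
    (μ : K) (v : n → K) :
    (P * A * P⁻¹) *ᵥ v = μ • v ↔ A *ᵥ (P⁻¹ *ᵥ v) = μ • (P⁻¹ *ᵥ v) := by
  conv_rhs => rw [← (mulVec_injective_of_isUnit ((isUnit_iff_isUnit_det P).2 hP)).eq_iff]
  simp only [mulVec_smul, mulVec_mulVec, Matrix.mul_assoc, mul_nonsing_inv P hP, one_mulVec]

theorem mulVec_ne_zero_of_isUnit_det {P : Matrix n n K} (hP : IsUnit P.det) {v : n → K}
    (hv : v ≠ 0) : P *ᵥ v ≠ 0 :=
  ((mulVec_injective_of_isUnit ((isUnit_iff_isUnit_det P).2 hP)).ne_iff' (mulVec_zero P)).2 hv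

theorem upperTriangular_mulVec_apply_zero (a b d : K) (u : Fin 2 → K) :
    (!![a, b; 0, d] *ᵥ u) 0 = a * u 0 + b * u 1 := by
  simp [mulVec, dotProduct, Fin.sum_univ_two]

theorem upperTriangular_mulVec_apply_one (a b d : K) (u : Fin 2 → K) :
    (!![a, b; 0, d] *ᵥ u) 1 = d * u 1 := by
  simp [mulVec, dotProduct, Fin.sum_univ_two]

theorem eq_of_upperTriangular_mulVec_eq_smul {a b μ : K} {u : Fin 2 → K} (hu : u ≠ 0)
    (h : !![a, b; 0, a] *ᵥ u = μ • u) : μ = a := by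
  have h0 : a * u 0 + b * u 1 = μ * u 0 := by
    simpa [upperTriangular_mulVec_apply_zero] using congrFun h 0
  have h1 : a * u 1 = μ * u 1 := by
    simpa [upperTriangular_mulVec_apply_one] using congrFun h 1
  by_cases hu1 : u 1 = 0
  · have hu0 : u 0 ≠ 0 := fun hu0 => hu (by ext i; fin_cases i <;> assumption)
    rw [hu1, mul_zero, add_zero] at h0
    exact (mul_right_cancel₀ hu0 h0).symm
  · exact (mul_right_cancel₀ hu1 h1).symm

theorem upperTriangular_mulVec_eq_smul_iff {a b : K} (hb : b ≠ 0) (u : Fin 2 → K) :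
    !![a, b; 0, a] *ᵥ u = a • u ↔ u 1 = 0 := by
  constructor
  · intro h
    have h0 : a * u 0 + b * u 1 = a * u 0 := by
      simpa [upperTriangular_mulVec_apply_zero] using congrFun h 0
    simpa [hb] using h0
  · intro hu1
    ext i; fin_cases i <;>
      simp [upperTriangular_mulVec_apply_zero, upperTriangular_mulVec_apply_one, hu1]

end Matrix

theorem isUnit_det_rotation (θ : ℝ) :
    IsUnit !![cos θ, -sin θ; sin θ, cos θ].det := by
  simp [det_fin_two_of, ← sq, cos_sq_add_sin_sq]

theorem smul_conj_add_smul_conj {n R : Type*} [Fintype n] [CommRing R]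
    (α β : R) (P Q A B : Matrix n n R) :
    α • (P * A * Q) + β • (P * B * Q) = P * (α • A + β • B) * Q := by
  rw [Matrix.mul_add, Matrix.add_mul, Matrix.mul_smul, Matrix.smul_mul, Matrix.mul_smul,
    Matrix.smul_mul]

theorem engquistRunborg_jacobian_combination (θ α β : ℝ) :
    α • !![cos θ, -sin θ; 0, cos θ] + β • !![sin θ, cos θ; 0, sin θ] =
      !![α * cos θ + β * sin θ, -α * sin θ + β * cos θ; 0, α * cos θ + β * sin θ] := by
  ext i j; fin_cases i <;> fin_cases j <;> simp

theorem stmt_9_general (θ α β : ℝ)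
    (hoff : -α * Real.sin θ + β * Real.cos θ ≠ 0)
    (R M : Matrix (Fin 2) (Fin 2) ℝ)
    (hR : R = !![Real.cos θ, -Real.sin θ; Real.sin θ, Real.cos θ])
    (hM : M = α • (R * !![Real.cos θ, -Real.sin θ; 0, Real.cos θ] * R⁻¹) +
              β • (R * !![Real.sin θ, Real.cos θ; 0, Real.sin θ] * R⁻¹)) :
    (∀ (μ : ℝ) (v : Fin 2 → ℝ), v ≠ 0 → M.mulVec v = μ • v →
        μ = α * Real.cos θ + β * Real.sin θ) ∧
    ∃ v : Fin 2 → ℝ, v ≠ 0 ∧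
      M.mulVec v = (α * Real.cos θ + β * Real.sin θ) • v ∧
      ∀ w : Fin 2 → ℝ,
        M.mulVec w = (α * Real.cos θ + β * Real.sin θ) • w → ∃ t : ℝ, w = t • v := by
  have hRdet : IsUnit R.det := hR ▸ isUnit_det_rotation θ
  rw [smul_conj_add_smul_conj, engquistRunborg_jacobian_combination] at hM
  subst hM
  have hRinvR : R⁻¹ *ᵥ (R *ᵥ ![1, 0]) = ![1, 0] := by
    rw [mulVec_mulVec, nonsing_inv_mul R hRdet, one_mulVec]
  refine ⟨fun μ v hv h => ?_, R *ᵥ ![1, 0], ?_, ?_, fun w hw => ?_⟩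
  · rw [conj_mulVec_eq_smul_iff hRdet] at h
    exact eq_of_upperTriangular_mulVec_eq_smul
      (mulVec_ne_zero_of_isUnit_det (isUnit_nonsing_inv_det R hRdet) hv) h
  · exact mulVec_ne_zero_of_isUnit_det hRdet (by simp)
  · rw [conj_mulVec_eq_smul_iff hRdet, hRinvR, upperTriangular_mulVec_eq_smul_iff hoff]
    rfl
  · rw [conj_mulVec_eq_smul_iff hRdet, upperTriangular_mulVec_eq_smul_iff hoff] at hw
    have hu : (R⁻¹ *ᵥ w) 0 • ![1, 0] = R⁻¹ *ᵥ w := by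
      ext i; fin_cases i <;> simp [hw]
    refine ⟨(R⁻¹ *ᵥ w) 0, ?_⟩
    rw [← mulVec_smul, hu, mulVec_mulVec, mul_nonsing_inv R hRdet, one_mulVec]

/-- Every nontrivial linear combination of the two Engquist–Runborg flux
Jacobians (written in their Jordan form conjugated by the rotation R) is
non-diagonalizable whenever -α sin θ + β cos θ ≠ 0: it has the repeated
eigenvalue α cos θ + β sin θ with a one-dimensional eigenspace. -/
theorem stmt_9 (θ α β : ℝ) (hαβ : (α, β) ≠ (0, 0))
    (hoff : -α * Real.sin θ + β * Real.cos θ ≠ 0)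
    (R M : Matrix (Fin 2) (Fin 2) ℝ)
    (hR : R = !![Real.cos θ, -Real.sin θ; Real.sin θ, Real.cos θ])
    (hM : M = α • (R * !![Real.cos θ, -Real.sin θ; 0, Real.cos θ] * R⁻¹) +
              β • (R * !![Real.sin θ, Real.cos θ; 0, Real.sin θ] * R⁻¹)) :
    (∀ (μ : ℝ) (v : Fin 2 → ℝ), v ≠ 0 → M.mulVec v = μ • v →
        μ = α * Real.cos θ + β * Real.sin θ) ∧
    ∃ v : Fin 2 → ℝ, v ≠ 0 ∧
      M.mulVec v = (α * Real.cos θ + β * Real.sin θ) • v ∧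
      ∀ w : Fin 2 → ℝ,
        M.mulVec w = (α * Real.cos θ + β * Real.sin θ) • w → ∃ t : ℝ, w = t • v :=
  stmt_9_general θ α β hoff R M hR hM
end
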